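/- arXiv:1109.4976 — 2 statements merged into one kernel-verified Lean document; each statement's English description precedes it below -/
import Mathlib

section
/- For all n ≥ 1, Σ_{σ ∈ Av_n(231,312,321)} q^{inv σ} = Σ_{k=0}^{⌊n/2⌋} binomial(n-k, k) q^k. In particular, setting q = 1 shows #Av_n(231,312,321) equals the Fibonacci number F_n (with F_0 = F_1 = 1). -/
open scoped Classical

/-- `σ` contains the pattern `π`. -/
def permContains {n k : ℕ} (σ : Equiv.Perm (Fin n)) (π : Equiv.Perm (Fin k)) : Prop :=
  ∃ f : Fin k → Fin n, StrictMono f ∧ ∀ i j : Fin k, π i < π j ↔ σ (f i) < σ (f j)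

/-- `σ` avoids the pattern `π`. -/
def permAvoids {n k : ℕ} (σ : Equiv.Perm (Fin n)) (π : Equiv.Perm (Fin k)) : Prop :=
  ¬ permContains σ π

def p123 : Equiv.Perm (Fin 3) := 1
def p132 : Equiv.Perm (Fin 3) := Equiv.swap 1 2
def p213 : Equiv.Perm (Fin 3) := Equiv.swap 0 1
def p231 : Equiv.Perm (Fin 3) := finRotate 3
def p312 : Equiv.Perm (Fin 3) := (finRotate 3)⁻¹
def p321 : Equiv.Perm (Fin 3) := Equiv.swap 0 2

/-- Descent set of a permutation, as a set of (1-based) positions `i` with `a_i > a_{i+1}`. -/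
def desSet {n : ℕ} (σ : Equiv.Perm (Fin n)) : Finset ℕ :=
  (Finset.Ico 1 n).filter
    (fun i => ∀ h : i < n, σ ⟨i, h⟩ < σ ⟨i - 1, Nat.lt_of_le_of_lt (Nat.sub_le i 1) h⟩)

/-- Major index: sum of descent positions. -/
def majIdx {n : ℕ} (σ : Equiv.Perm (Fin n)) : ℕ := ∑ i ∈ desSet σ, i

/-- Number of descents. -/
def desNum {n : ℕ} (σ : Equiv.Perm (Fin n)) : ℕ := (desSet σ).card

/-- Number of inversions. -/
def invNum {n : ℕ} (σ : Equiv.Perm (Fin n)) : ℕ :=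
  ((Finset.univ : Finset (Fin n × Fin n)).filter (fun p => p.1 < p.2 ∧ σ p.2 < σ p.1)).card

open Equiv Finset

def Cond {n : ℕ} (σ : Equiv.Perm (Fin n)) : Prop :=
  ∀ i : Fin n, (σ i : ℕ) ≤ (i : ℕ) + 1 ∧ (i : ℕ) ≤ (σ i : ℕ) + 1

lemma strictMono_fin3 {n : ℕ} (f : Fin 3 → Fin n) (h01 : f 0 < f 1) (h12 : f 1 < f 2) :
    StrictMono f := by
  intro a b hab
  fin_cases a <;> fin_cases b <;> simp_all <;>
    first
      | exact lt_trans h01 h12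
      | exact absurd hab (by decide)

lemma cond_avoids {n : ℕ} {σ : Equiv.Perm (Fin n)} (hσ : Cond σ) {π : Equiv.Perm (Fin 3)}
    (hπ : π 2 < π 0) : permAvoids σ π := by
  rintro ⟨f, hf, hiff⟩
  have h20 : σ (f 2) < σ (f 0) := (hiff 2 0).mp hπ
  have h1 : f 0 < f 2 := hf (show (0:Fin 3) < 2 by decide)
  have h2 : f 0 < f 1 := hf (show (0:Fin 3) < 1 by decide)
  have h3 : f 1 < f 2 := hf (show (1:Fin 3) < 2 by decide)
  have c0 := hσ (f 0)
  have c2 := hσ (f 2)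
  rw [Fin.lt_def] at h20 h1 h2 h3
  omega

-- counting lemma: card of positions with value < v is v
lemma card_val_lt {n : ℕ} (σ : Equiv.Perm (Fin n)) (v : Fin n) :
    (univ.filter (fun j => σ j < v)).card = (v : ℕ) := by
  have h : (univ.filter (fun j => σ j < v)) = (Finset.Iio v).map σ.symm.toEmbedding := by
    ext x
    simp [Equiv.symm_apply_eq, eq_comm]
  rw [h, Finset.card_map, Fin.card_Iio]

lemma two_above {n : ℕ} (σ : Equiv.Perm (Fin n)) (i : Fin n) (h : (i:ℕ) + 2 ≤ σ i) :
    ∃ j k : Fin n, i < j ∧ j < k ∧ σ j < σ i ∧ σ k < σ i := by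
  set s := univ.filter (fun j => i < j ∧ σ j < σ i) with hs
  have hsub : univ.filter (fun j => σ j < σ i) ⊆ s ∪ univ.filter (fun j => j < i) := by
    intro x hx
    simp only [mem_filter, mem_univ, true_and] at hx
    rcases lt_trichotomy i x with h'|h'|h'
    · exact Finset.mem_union_left _ (by simp [hs, h', hx])
    · subst h'; exact absurd hx (lt_irrefl _)
    · exact Finset.mem_union_right _ (by simp [h'])
  have hcard := Finset.card_le_card hsub
  rw [card_val_lt] at hcard
  have h2 : (univ.filter (fun j => j < i)).card = (i : ℕ) := by
    have : (univ.filter (fun j => j < i)) = Finset.Iio i := by ext x; simp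
    rw [this, Fin.card_Iio]
  have hle := Finset.card_union_le s (univ.filter (fun j => j < i))
  have : 2 ≤ s.card := by omega
  obtain ⟨a, ha, b, hb, hab⟩ := Finset.one_lt_card.mp this
  simp only [hs, mem_filter, mem_univ, true_and] at ha hb
  rcases lt_or_gt_of_ne hab with h'|h'
  · exact ⟨a, b, ha.1, h', ha.2, hb.2⟩
  · exact ⟨b, a, hb.1, h', hb.2, ha.2⟩

lemma two_below {n : ℕ} (σ : Equiv.Perm (Fin n)) (i : Fin n) (h : (σ i :ℕ) + 2 ≤ i) :
    ∃ j k : Fin n, j < k ∧ k < i ∧ σ i < σ j ∧ σ i < σ k := by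
  obtain ⟨j, k, h1, h2, h3, h4⟩ := two_above σ⁻¹ (σ i) (by simpa using h)
  set a := σ⁻¹ j with ha
  set b := σ⁻¹ k with hb
  have haj : σ a = j := by simp [ha]
  have hbk : σ b = k := by simp [hb]
  have hai : a < i := by simpa [ha] using h3
  have hbi : b < i := by simpa [hb] using h4
  have hne : a ≠ b := fun e => by rw [e] at haj; exact absurd (haj.symm.trans hbk) (ne_of_lt h2)
  rcases lt_or_gt_of_ne hne with h'|h'
  · exact ⟨a, b, h', hbi, by rw [haj]; exact h1, by rw [hbk]; exact lt_trans h1 h2⟩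
  · exact ⟨b, a, h', hai, by rw [hbk]; exact lt_trans h1 h2, by rw [haj]; exact h1⟩

lemma contains_of {n : ℕ} (σ : Equiv.Perm (Fin n)) (π : Equiv.Perm (Fin 3)) (i j k : Fin n)
    (hij : i < j) (hjk : j < k)
    (h : ∀ a b : Fin 3, π a < π b → σ (![i,j,k] a) < σ (![i,j,k] b)) :
    permContains σ π := by
  refine ⟨![i,j,k], strictMono_fin3 _ (by simpa using hij) (by simpa using hjk), fun a b => ?_⟩
  refine ⟨h a b, fun hab => ?_⟩
  rcases lt_trichotomy (π a) (π b) with h'|h'|h'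
  · exact h'
  · exact absurd hab (by rw [π.injective h']; exact lt_irrefl _)
  · exact absurd hab (asymm (h b a h'))

lemma not_cond_contains {n : ℕ} (σ : Equiv.Perm (Fin n)) (h : ¬ Cond σ) :
    permContains σ p231 ∨ permContains σ p312 ∨ permContains σ p321 := by
  simp only [Cond, not_forall] at h
  obtain ⟨i, hi⟩ := h
  rw [not_and_or] at hi
  rcases hi with hi | hi
  · -- σ i ≥ i + 2
    push_neg at hi
    obtain ⟨j, k, h1, h2, h3, h4⟩ := two_above σ i (by omega)
    rcases lt_or_gt_of_ne (fun e : σ j = σ k => absurd (σ.injective e) (ne_of_lt h2)) with h'|h'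
    · -- σ j < σ k < σ i : pattern 312
      right; left
      refine contains_of σ p312 i j k h1 h2 (fun a b => ?_)
      fin_cases a <;> fin_cases b <;> intro hab <;>
        first
          | exact absurd hab (by decide)
          | simpa using h3
          | simpa using h4
          | simpa using h'
    · -- σ k < σ j < σ i : pattern 321
      right; right
      refine contains_of σ p321 i j k h1 h2 (fun a b => ?_)
      fin_cases a <;> fin_cases b <;> intro hab <;>
        first
          | exact absurd hab (by decide)
          | simpa using h3
          | simpa using h4
          | simpa using h'
  · -- i ≥ σ i + 2
    push_neg at hi
    obtain ⟨j, k, h1, h2, h3, h4⟩ := two_below σ i (by omega)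
    rcases lt_or_gt_of_ne (fun e : σ j = σ k => absurd (σ.injective e) (ne_of_lt h1)) with h'|h'
    · -- σ j < σ k, both > σ i : pattern 231
      left
      refine contains_of σ p231 j k i h1 h2 (fun a b => ?_)
      fin_cases a <;> fin_cases b <;> intro hab <;>
        first
          | exact absurd hab (by decide)
          | simpa using h3
          | simpa using h4
          | simpa using h'
    · -- σ k < σ j, both > σ i : pattern 321
      right; right
      refine contains_of σ p321 j k i h1 h2 (fun a b => ?_)
      fin_cases a <;> fin_cases b <;> intro hab <;>
        first
          | exact absurd hab (by decide)
          | simpa using h3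
          | simpa using h4
          | simpa using h'

lemma avoids_iff_cond {n : ℕ} (σ : Equiv.Perm (Fin n)) :
    (permAvoids σ p231 ∧ permAvoids σ p312 ∧ permAvoids σ p321) ↔ Cond σ := by
  constructor
  · intro h
    by_contra hC
    rcases not_cond_contains σ hC with h'|h'|h'
    exacts [h.1 h', h.2.1 h', h.2.2 h']
  · intro hC
    exact ⟨cond_avoids hC (by decide), cond_avoids hC (by decide), cond_avoids hC (by decide)⟩
noncomputable def AvSet (n : ℕ) : Finset (Equiv.Perm (Fin n)) := univ.filter Cond

def e1 {n : ℕ} (ρ : Equiv.Perm (Fin n)) : Equiv.Perm (Fin (n+1)) :=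
  Equiv.Perm.decomposeFin.symm (0, ρ)

def e2 {n : ℕ} (ρ : Equiv.Perm (Fin n)) : Equiv.Perm (Fin (n+2)) :=
  Equiv.Perm.decomposeFin.symm (1, e1 ρ)

lemma e1_zero {n : ℕ} (ρ : Equiv.Perm (Fin n)) : e1 ρ 0 = 0 :=
  Equiv.Perm.decomposeFin_symm_apply_zero 0 ρ

lemma e1_succ {n : ℕ} (ρ : Equiv.Perm (Fin n)) (x : Fin n) : e1 ρ x.succ = (ρ x).succ := by
  rw [e1, Equiv.Perm.decomposeFin_symm_apply_succ]
  simp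

lemma e2_zero {n : ℕ} (ρ : Equiv.Perm (Fin n)) : e2 ρ 0 = 1 :=
  Equiv.Perm.decomposeFin_symm_apply_zero 1 _

lemma e2_one {n : ℕ} (ρ : Equiv.Perm (Fin n)) : e2 ρ 1 = 0 := by
  have : (1 : Fin (n+2)) = (0 : Fin (n+1)).succ := rfl
  rw [this, e2, Equiv.Perm.decomposeFin_symm_apply_succ, e1_zero]
  simp [Equiv.swap_apply_right]

lemma e2_succ_succ {n : ℕ} (ρ : Equiv.Perm (Fin n)) (x : Fin n) :
    e2 ρ x.succ.succ = (ρ x).succ.succ := by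
  rw [e2, Equiv.Perm.decomposeFin_symm_apply_succ, e1_succ]
  apply Equiv.swap_apply_of_ne_of_ne
  · exact Fin.succ_ne_zero _
  · simp only [ne_eq, Fin.ext_iff, Fin.val_succ, Fin.val_one]
    omega

lemma cond_e1 {n : ℕ} (ρ : Equiv.Perm (Fin n)) : Cond (e1 ρ) ↔ Cond ρ := by
  constructor
  · intro h x
    have := h x.succ
    rw [e1_succ] at this
    simpa [Fin.val_succ] using this
  · intro h i
    induction i using Fin.cases with
    | zero => simp [e1_zero]
    | succ x =>
      have := h x
      rw [e1_succ]
      simp only [Fin.val_succ]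
      omega

lemma cond_e2 {n : ℕ} (ρ : Equiv.Perm (Fin n)) : Cond (e2 ρ) ↔ Cond ρ := by
  constructor
  · intro h x
    have := h x.succ.succ
    rw [e2_succ_succ] at this
    simpa [Fin.val_succ] using this
  · intro h i
    induction i using Fin.cases with
    | zero => simp [e2_zero]
    | succ x =>
      induction x using Fin.cases with
      | zero =>
        have h1 : (0 : Fin (n+1)).succ = (1 : Fin (n+2)) := rfl
        rw [h1, e2_one]
        simp
      | succ y =>
        have := h y
        rw [e2_succ_succ]
        simp only [Fin.val_succ]
        omega
lemma invNum_e1 {n : ℕ} (ρ : Equiv.Perm (Fin n)) : invNum (e1 ρ) = invNum ρ := by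
  unfold invNum
  symm
  apply Finset.card_bij (fun p _ => (p.1.succ, p.2.succ))
  · intro p hp
    simp only [mem_filter, mem_univ, true_and] at hp ⊢
    rw [e1_succ, e1_succ]
    exact ⟨Fin.succ_lt_succ_iff.mpr hp.1, Fin.succ_lt_succ_iff.mpr hp.2⟩
  · intro p hp q hq h
    simp only [Prod.mk.injEq] at h
    exact Prod.ext (Fin.succ_injective _ h.1) (Fin.succ_injective _ h.2)
  · rintro ⟨b1, b2⟩ hb
    simp only [mem_filter, mem_univ, true_and] at hb
    induction b1 using Fin.cases with
    | succ x =>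
      induction b2 using Fin.cases with
      | succ y =>
        refine ⟨(x, y), ?_, rfl⟩
        simp only [mem_filter, mem_univ, true_and]
        rw [e1_succ, e1_succ] at hb
        exact ⟨Fin.succ_lt_succ_iff.mp hb.1, Fin.succ_lt_succ_iff.mp hb.2⟩
      | zero => exact absurd hb.1 (Fin.not_lt_zero _)
    | zero =>
      rw [e1_zero] at hb
      exact absurd hb.2 (Fin.not_lt_zero _)

lemma invNum_e2 {n : ℕ} (ρ : Equiv.Perm (Fin n)) : invNum (e2 ρ) = invNum ρ + 1 := by
  unfold invNum
  set t := ((Finset.univ : Finset (Fin (n+2) × Fin (n+2))).filter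
      (fun p => p.1 < p.2 ∧ e2 ρ p.2 < e2 ρ p.1)) with ht
  have h01 : ((0 : Fin (n+2)), (1 : Fin (n+2))) ∈ t := by
    simp only [ht, mem_filter, mem_univ, true_and]
    rw [e2_zero, e2_one]
    refine ⟨?_, ?_⟩ <;> simp [Fin.lt_def]
  rw [← Finset.card_erase_add_one h01]
  congr 1
  symm
  apply Finset.card_bij (fun p _ => (p.1.succ.succ, p.2.succ.succ))
  · intro p hp
    simp only [mem_filter, mem_univ, true_and] at hp
    rw [Finset.mem_erase]
    constructor
    · intro h
      have h' : p.1.succ.succ = (0 : Fin (n+2)) := congrArg Prod.fst h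
      exact absurd h' (Fin.succ_ne_zero _)
    · simp only [ht, mem_filter, mem_univ, true_and]
      rw [e2_succ_succ, e2_succ_succ]
      exact ⟨Fin.succ_lt_succ_iff.mpr (Fin.succ_lt_succ_iff.mpr hp.1),
        Fin.succ_lt_succ_iff.mpr (Fin.succ_lt_succ_iff.mpr hp.2)⟩
  · intro p hp q hq h
    simp only [Prod.mk.injEq] at h
    exact Prod.ext (Fin.succ_injective _ (Fin.succ_injective _ h.1))
      (Fin.succ_injective _ (Fin.succ_injective _ h.2))
  · rintro ⟨b1, b2⟩ hb
    rw [Finset.mem_erase] at hb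
    obtain ⟨hne, hb⟩ := hb
    simp only [ht, mem_filter, mem_univ, true_and] at hb
    induction b1 using Fin.cases with
    | zero =>
      -- e2 ρ b2 < e2 ρ 0 = 1, so e2 ρ b2 = 0 = e2 ρ 1, so b2 = 1, contradiction
      rw [e2_zero] at hb
      have hb2 : e2 ρ b2 = 0 := (Fin.lt_one_iff _).mp hb.2
      have : b2 = 1 := (e2 ρ).injective (by rw [hb2, e2_one])
      exact absurd (by rw [this]) hne
    | succ x =>
      induction x using Fin.cases with
      | zero =>
        -- b1 = 1 : e2 ρ b2 < e2 ρ 1 = 0, impossible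
        have h1 : (0 : Fin (n+1)).succ = (1 : Fin (n+2)) := rfl
        rw [h1, e2_one] at hb
        exact absurd hb.2 (Fin.not_lt_zero _)
      | succ y =>
        -- b1 = y.succ.succ ; then b2 > b1 forces b2 = z.succ.succ
        induction b2 using Fin.cases with
        | zero => exact absurd hb.1 (Fin.not_lt_zero _)
        | succ w =>
          induction w using Fin.cases with
          | zero =>
            have : ¬ (y.succ.succ < (0:Fin (n+1)).succ) := by
              rw [Fin.lt_def]; simp
            exact absurd hb.1 this
          | succ z =>
            refine ⟨(y, z), ?_, rfl⟩
            simp only [mem_filter, mem_univ, true_and]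
            rw [e2_succ_succ, e2_succ_succ] at hb
            exact ⟨Fin.succ_lt_succ_iff.mp (Fin.succ_lt_succ_iff.mp hb.1),
              Fin.succ_lt_succ_iff.mp (Fin.succ_lt_succ_iff.mp hb.2)⟩
lemma e1_injective {n : ℕ} : Function.Injective (e1 (n := n)) := by
  intro a b h
  have := Equiv.Perm.decomposeFin.symm.injective h
  exact (Prod.mk.injEq _ _ _ _ ▸ congrArg id this) |>.2

lemma e2_injective {n : ℕ} : Function.Injective (e2 (n := n)) := by
  intro a b h
  have h1 := Equiv.Perm.decomposeFin.symm.injective h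
  have h2 : e1 a = e1 b := ((Prod.mk.injEq _ _ _ _) ▸ congrArg id h1).2
  exact e1_injective h2

lemma avset_decomp (n : ℕ) :
    AvSet (n+2) = (AvSet (n+1)).image e1 ∪ (AvSet n).image e2 := by
  ext σ
  simp only [AvSet, Finset.mem_union, Finset.mem_image, mem_filter, mem_univ, true_and]
  constructor
  · intro hσ
    have h0 : (σ 0 : ℕ) ≤ 1 := by simpa using (hσ 0).1
    set ρ := (Equiv.Perm.decomposeFin σ).2 with hρ
    have hσeq : σ = Equiv.Perm.decomposeFin.symm ((Equiv.Perm.decomposeFin σ).1, ρ) := by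
      rw [hρ]
      exact (Equiv.symm_apply_apply _ σ).symm
    have hfst : (Equiv.Perm.decomposeFin σ).1 = σ 0 := by
      conv_rhs => rw [hσeq]
      rw [Equiv.Perm.decomposeFin_symm_apply_zero]
    by_cases hz : σ 0 = 0
    · left
      refine ⟨ρ, ?_, ?_⟩
      · have : σ = e1 ρ := by rw [hσeq, hfst, hz]; rfl
        exact (cond_e1 ρ).mp (this ▸ hσ)
      · rw [hσeq, hfst, hz]; rfl
    · right
      have h1 : σ 0 = 1 := by
        rw [Fin.ext_iff] at hz ⊢
        simp only [Fin.val_zero, Fin.val_one] at *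
        omega
      -- σ 1 = 0
      have hs1 : σ 1 = 0 := by
        set j := σ.symm 0 with hj
        have hσj : σ j = 0 := Equiv.apply_symm_apply σ 0
        have hj1 : (j : ℕ) ≤ 1 := by
          have := (hσ j).2
          rw [hσj] at this
          simpa using this
        have hjne : j ≠ 0 := by
          intro e
          rw [e] at hσj
          rw [hσj] at h1
          exact absurd h1.symm (by rw [Fin.ext_iff]; norm_num)
        have : j = 1 := by
          have hv : (j : ℕ) ≠ 0 := fun e => hjne (Fin.ext (by simpa using e))
          apply Fin.ext
          simp only [Fin.val_one]
          omega
        rw [← this, hσj]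
      -- τ := second component; τ 0 = 0
      have hτ0 : ρ 0 = 0 := by
        have : σ 1 = Equiv.swap 0 (σ 0) (ρ 0).succ := by
          conv_lhs => rw [hσeq]
          rw [hfst]
          have : (1 : Fin (n+2)) = (0 : Fin (n+1)).succ := rfl
          rw [this, Equiv.Perm.decomposeFin_symm_apply_succ]
        rw [hs1, h1] at this
        have h2 : (ρ 0).succ = Equiv.swap (0 : Fin (n+2)) 1 0 := by
          apply (Equiv.swap 0 1).injective
          rw [Equiv.swap_apply_self]
          exact this.symm
        rw [Equiv.swap_apply_left] at h2
        have : (ρ 0).succ = (0 : Fin (n+1)).succ := h2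
        exact Fin.succ_injective _ this
      -- ρ = e1 ρ' for ρ' := (decomposeFin ρ).2
      set ρ' := (Equiv.Perm.decomposeFin ρ).2 with hρ'
      have hρeq : ρ = Equiv.Perm.decomposeFin.symm ((Equiv.Perm.decomposeFin ρ).1, ρ') := by
        rw [hρ']
        exact (Equiv.symm_apply_apply _ ρ).symm
      have hfst' : (Equiv.Perm.decomposeFin ρ).1 = ρ 0 := by
        conv_rhs => rw [hρeq]
        rw [Equiv.Perm.decomposeFin_symm_apply_zero]
      have hρe1 : ρ = e1 ρ' := by rw [hρeq, hfst', hτ0]; rfl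
      have hσe2 : σ = e2 ρ' := by
        rw [hσeq, hfst, h1, e2, ← hρe1]
      exact ⟨ρ', (cond_e2 ρ').mp (hσe2 ▸ hσ), hσe2.symm⟩
  · rintro (⟨ρ, hρ, rfl⟩ | ⟨ρ, hρ, rfl⟩)
    · exact (cond_e1 ρ).mpr hρ
    · exact (cond_e2 ρ).mpr hρ

lemma avset_disj (n : ℕ) :
    Disjoint ((AvSet (n+1)).image e1) ((AvSet n).image (e2 (n := n))) := by
  rw [Finset.disjoint_left]
  rintro σ h1 h2
  obtain ⟨a, _, rfl⟩ := Finset.mem_image.mp h1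
  obtain ⟨b, _, hb⟩ := Finset.mem_image.mp h2
  have : e1 a 0 = e2 b 0 := by rw [hb]
  rw [e1_zero, e2_zero] at this
  exact absurd this (by rw [Fin.ext_iff]; norm_num)
lemma cond_small {n : ℕ} (hn : n ≤ 1) (σ : Equiv.Perm (Fin n)) : Cond σ := by
  intro i
  have h1 := (σ i).isLt
  have h2 := i.isLt
  omega

lemma invNum_small {n : ℕ} (hn : n ≤ 1) (σ : Equiv.Perm (Fin n)) : invNum σ = 0 := by
  rw [invNum, Finset.card_eq_zero, Finset.filter_eq_empty_iff]
  rintro ⟨p1, p2⟩ _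
  rintro ⟨h1, -⟩
  rw [Fin.lt_def] at h1
  have := p1.isLt
  have := p2.isLt
  omega

lemma avset_small {n : ℕ} (hn : n ≤ 1) : AvSet n = Finset.univ :=
  Finset.filter_true_of_mem (fun σ _ => cond_small hn σ)

lemma card_avset_small {n : ℕ} (hn : n ≤ 1) : (AvSet n).card = 1 := by
  rw [avset_small hn, Finset.card_univ, Fintype.card_perm, Fintype.card_fin]
  interval_cases n <;> rfl

lemma sum_avset_small {n : ℕ} (hn : n ≤ 1) (q : ℚ) : ∑ σ ∈ AvSet n, q ^ invNum σ = 1 := by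
  have h : ∀ σ ∈ AvSet n, q ^ invNum σ = 1 := by
    intro σ _
    rw [invNum_small hn, pow_zero]
  rw [Finset.sum_congr rfl h, Finset.sum_const, card_avset_small hn]
  simp

noncomputable def Rq (n : ℕ) (q : ℚ) : ℚ :=
  ∑ k ∈ Finset.range (n / 2 + 1), ((n - k).choose k : ℚ) * q ^ k

lemma Rq_succ_ext (n : ℕ) (q : ℚ) :
    Rq (n+1) q = ∑ k ∈ Finset.range (n / 2 + 2), (((n+1) - k).choose k : ℚ) * q ^ k := by
  rcases Nat.even_or_odd n with h | h
  · obtain ⟨m, rfl⟩ := h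
    have h1 : (m + m + 1) / 2 + 1 = (m + m) / 2 + 1 := by omega
    have h2 : (m + m) / 2 + 2 = ((m + m) / 2 + 1) + 1 := rfl
    rw [Rq, h1, h2]
    conv_rhs => rw [Finset.sum_range_succ]
    have h3 : ((m + m + 1) - ((m + m)/2 + 1)).choose ((m + m)/2 + 1) = 0 := by
      apply Nat.choose_eq_zero_of_lt
      omega
    rw [h3]
    simp
  · obtain ⟨m, rfl⟩ := h
    have h1 : (2*m+1+1)/2 + 1 = (2*m+1)/2 + 2 := by omega
    rw [Rq, h1]

lemma Rq_rec (n : ℕ) (q : ℚ) : Rq (n + 2) q = Rq (n + 1) q + q * Rq n q := by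
  have hL : Rq (n+2) q = ∑ k ∈ Finset.range (n/2 + 2), ((n + 2 - k).choose k : ℚ) * q ^ k := by
    have h1 : (n+2)/2 + 1 = n/2 + 2 := by omega
    rw [Rq, h1]
  rw [hL, Rq_succ_ext,
    Finset.sum_range_succ' (fun k => ((n + 2 - k).choose k : ℚ) * q ^ k) (n/2 + 1),
    Finset.sum_range_succ' (fun k => ((n + 1 - k).choose k : ℚ) * q ^ k) (n/2 + 1)]
  have hsplit : ∀ k ∈ Finset.range (n/2 + 1),
      ((n + 2 - (k+1)).choose (k+1) : ℚ) * q ^ (k+1)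
        = ((n + 1 - (k+1)).choose (k+1) : ℚ) * q ^ (k+1) + q * (((n - k).choose k : ℚ) * q ^ k) := by
    intro k hk
    rw [Finset.mem_range] at hk
    have h1 : n + 2 - (k+1) = (n - k) + 1 := by omega
    have h2 : n + 1 - (k+1) = n - k := by omega
    rw [h1, h2, Nat.choose_succ_succ]
    push_cast
    ring
  rw [Finset.sum_congr rfl hsplit, Finset.sum_add_distrib, Rq, Finset.mul_sum]
  simp only [Nat.add_sub_cancel, Nat.choose_zero_right, Nat.cast_one, pow_zero, mul_one]
  ring

lemma sum_rec (n : ℕ) (q : ℚ) :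
    ∑ σ ∈ AvSet (n+2), q ^ invNum σ
      = (∑ σ ∈ AvSet (n+1), q ^ invNum σ) + q * ∑ σ ∈ AvSet n, q ^ invNum σ := by
  rw [avset_decomp n, Finset.sum_union (avset_disj n),
    Finset.sum_image (fun a _ b _ h => e1_injective h),
    Finset.sum_image (fun a _ b _ h => e2_injective h)]
  congr 1
  · exact Finset.sum_congr rfl (fun ρ _ => by rw [invNum_e1])
  · rw [Finset.mul_sum]
    apply Finset.sum_congr rfl
    intro ρ _
    rw [invNum_e2, pow_succ]
    ring

lemma card_rec (n : ℕ) :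
    (AvSet (n+2)).card = (AvSet (n+1)).card + (AvSet n).card := by
  rw [avset_decomp n, Finset.card_union_of_disjoint (avset_disj n),
    Finset.card_image_of_injective _ e1_injective,
    Finset.card_image_of_injective _ e2_injective]

lemma sum_rec' (n : ℕ) (q : ℚ) :
    ∑ σ ∈ AvSet (n+2), q ^ invNum σ
      = (∑ σ ∈ AvSet (n+1), q ^ invNum σ) + q * ∑ σ ∈ AvSet n, q ^ invNum σ := sum_rec n q

lemma main_ind (n : ℕ) :
    (∀ q : ℚ, ∑ σ ∈ AvSet n, q ^ invNum σ = Rq n q) ∧ (AvSet n).card = Nat.fib (n + 1) := by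
  induction n using Nat.twoStepInduction with
  | zero =>
    refine ⟨fun q => ?_, ?_⟩
    · rw [sum_avset_small (by norm_num), Rq]
      simp
    · rw [card_avset_small (by norm_num)]
      rfl
  | one =>
    refine ⟨fun q => ?_, ?_⟩
    · rw [sum_avset_small (by norm_num), Rq]
      simp
    · rw [card_avset_small (by norm_num)]
      rfl
  | more m ih1 ih2 =>
    refine ⟨fun q => ?_, ?_⟩
    · rw [sum_rec, ih1.1 q, ih2.1 q, Rq_rec]
    · rw [card_rec, ih1.2, ih2.2]
      have h : Nat.fib (m + 3) = Nat.fib (m + 1) + Nat.fib (m + 2) := Nat.fib_add_two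
      have g1 : m + 1 + 1 = m + 2 := rfl
      have g2 : m + 2 + 1 = m + 3 := rfl
      rw [g1, g2, h]
      omega

theorem inv_231_312_321 (n : ℕ) (hn : 1 ≤ n) :
    (∀ q : ℚ,
      ∑ σ ∈ Finset.univ.filter
          (fun σ : Equiv.Perm (Fin n) =>
            permAvoids σ p231 ∧ permAvoids σ p312 ∧ permAvoids σ p321),
        q ^ invNum σ = ∑ k ∈ Finset.range (n / 2 + 1), ((n - k).choose k : ℚ) * q ^ k) ∧
    (Finset.univ.filter
        (fun σ : Equiv.Perm (Fin n) =>
          permAvoids σ p231 ∧ permAvoids σ p312 ∧ permAvoids σ p321)).card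
      = Nat.fib (n + 1) := by
  have hfilter : Finset.univ.filter
      (fun σ : Equiv.Perm (Fin n) =>
        permAvoids σ p231 ∧ permAvoids σ p312 ∧ permAvoids σ p321) = AvSet n :=
    Finset.filter_congr (fun σ _ => avoids_iff_cond σ)
  refine ⟨fun q => ?_, ?_⟩
  · rw [hfilter, (main_ind n).1 q, Rq]
  · rw [hfilter, (main_ind n).2]
end

section
/- For all n ≥ 0, there is a descent-set-preserving bijection between Av_n(231,312,321) and the set of binary words of length n that are empty or contain no two consecutive ones and end in zero (where the descent set of a word w = w_1…w_n is {i : w_i > w_{i+1}}). Consequently Σ_{σ ∈ Av_n(231,312,321)} q^{maj σ} t^{des σ} equals the corresponding sum of q^{maj w} t^{des w} over such words w. -/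
open scoped Classical

/-- Descent set of a binary word (1-based positions i with w_i = 1 and w_{i+1} = 0). -/
def wordDesSet {n : ℕ} (w : Fin n → Bool) : Finset ℕ :=
  (Finset.Ico 1 n).filter
    (fun i => ∀ h : i < n,
      w ⟨i - 1, Nat.lt_of_le_of_lt (Nat.sub_le i 1) h⟩ = true ∧ w ⟨i, h⟩ = false)

def wordMaj {n : ℕ} (w : Fin n → Bool) : ℕ := ∑ i ∈ wordDesSet w, i

def wordDes {n : ℕ} (w : Fin n → Bool) : ℕ := (wordDesSet w).card

/-- A binary word that is empty, or has no two consecutive ones and ends in zero. -/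
def goodWord {n : ℕ} (w : Fin n → Bool) : Prop :=
  (∀ i : ℕ, ∀ h : i + 1 < n, w ⟨i, Nat.lt_of_succ_lt h⟩ = true → w ⟨i + 1, h⟩ = false) ∧
  (∀ h : 0 < n, w ⟨n - 1, Nat.sub_lt h Nat.one_pos⟩ = false)

/-!
A permutation avoiding 231, 312 and 321 moves no entry by more than one place: if `σ k ≥ k + 2`,
two later positions carry values below `σ k` and form a 312 or a 321 with `k`, and symmetrically
if `σ k + 2 ≤ k`. Conversely, each of the three patterns puts its last entry at least two places
after and below its first, which a displacement of at most one forbids. By pigeonhole such a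
permutation is an involution, a product of disjoint adjacent transpositions `(k k+1)`. Marking the
left ends `k` of these transpositions gives a binary word with no two consecutive ones and last
letter zero, every such word arises exactly once, and the descents of the permutation are exactly
the marked positions, i.e. the descents of the word.
-/

open Finset Equiv

lemma Equiv.Perm.card_filter_apply_mem {α : Type*} [Fintype α] [DecidableEq α] (σ : Perm α)
    (s : Finset α) : #{m | σ m ∈ s} = #s := by
  rw [← s.card_map σ.symm.toEmbedding]
  congr 1
  ext m
  simp [Finset.mem_map_equiv]

lemma Finset.exists_lt_mem_sdiff_of_card_add_two_le {α : Type*} [LinearOrder α] {s t : Finset α}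
    (h : #t + 2 ≤ #s) : ∃ b ∈ s \ t, ∃ c ∈ s \ t, b < c := by
  have : 1 < #(s \ t) := by have := le_card_sdiff t s; omega
  obtain ⟨b, hb, c, hc, hbc⟩ := one_lt_card.1 this
  rcases hbc.lt_or_gt with h | h
  exacts [⟨b, hb, c, hc, h⟩, ⟨c, hc, b, hb, h⟩]

variable {n : ℕ} {σ : Perm (Fin n)}

lemma strictMono_vecCons_three {a b c : Fin n} (hab : a < b) (hbc : b < c) :
    StrictMono ![a, b, c] :=
  Fin.strictMono_iff_lt_succ.2 (by simp [Fin.forall_fin_succ, hab, hbc])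

lemma permContains_p231 {a b c : Fin n} (hab : a < b) (hbc : b < c) (h₁ : σ c < σ a)
    (h₂ : σ a < σ b) : permContains σ p231 := by
  refine ⟨![a, b, c], strictMono_vecCons_three hab hbc, fun i j => ?_⟩
  have hπ : ∀ i, p231 i = ![1, 2, 0] i := by decide
  fin_cases i <;> fin_cases j <;> simp [hπ] <;> order

lemma permContains_p312 {a b c : Fin n} (hab : a < b) (hbc : b < c) (h₁ : σ b < σ c)
    (h₂ : σ c < σ a) : permContains σ p312 := by
  refine ⟨![a, b, c], strictMono_vecCons_three hab hbc, fun i j => ?_⟩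
  have hπ : ∀ i, p312 i = ![2, 0, 1] i := by decide
  fin_cases i <;> fin_cases j <;> simp [hπ] <;> order

lemma permContains_p321 {a b c : Fin n} (hab : a < b) (hbc : b < c) (h₁ : σ c < σ b)
    (h₂ : σ b < σ a) : permContains σ p321 := by
  refine ⟨![a, b, c], strictMono_vecCons_three hab hbc, fun i j => ?_⟩
  have hπ : ∀ i, p321 i = ![2, 1, 0] i := by decide
  fin_cases i <;> fin_cases j <;> simp [hπ] <;> order

def DisplacementLeOne (σ : Perm (Fin n)) : Prop :=
  ∀ k, (σ k : ℕ) ≤ k + 1 ∧ (k : ℕ) ≤ σ k + 1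

lemma DisplacementLeOne.permAvoids {π : Perm (Fin 3)} (hσ : DisplacementLeOne σ)
    (hπ : π 2 < π 0) : permAvoids σ π := by
  rintro ⟨f, hf, hfπ⟩
  have h₀₁ : (f 0 : ℕ) < f 1 := hf (show (0 : Fin 3) < 1 by decide)
  have h₁₂ : (f 1 : ℕ) < f 2 := hf (show (1 : Fin 3) < 2 by decide)
  have h₂₀ : (σ (f 2) : ℕ) < σ (f 0) := (hfπ 2 0).1 hπ
  have := hσ (f 0)
  have := hσ (f 2)
  omega

lemma displacementLeOne_of_permAvoids (h231 : permAvoids σ p231) (h312 : permAvoids σ p312)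
    (h321 : permAvoids σ p321) : DisplacementLeOne σ := by
  intro k
  constructor
  · by_contra! hk
    obtain ⟨b, hb, c, hc, hbc⟩ := exists_lt_mem_sdiff_of_card_add_two_le
      (s := {m | σ m ∈ Iio (σ k)}) (t := Iio k)
      (by rw [σ.card_filter_apply_mem, Fin.card_Iio, Fin.card_Iio]; omega)
    simp only [mem_sdiff, mem_filter, mem_univ, mem_Iio, true_and, not_lt] at hb hc
    have hkb : k < b := hb.2.lt_of_ne (by rintro rfl; exact lt_irrefl _ hb.1)
    rcases lt_or_gt_of_ne (σ.injective.ne hbc.ne) with h | h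
    · exact h312 (permContains_p312 hkb hbc h hc.1)
    · exact h321 (permContains_p321 hkb hbc h hb.1)
  · by_contra! hk
    obtain ⟨a, ha, b, hb, hab⟩ := exists_lt_mem_sdiff_of_card_add_two_le
      (s := {m | σ m ∈ Ioi (σ k)}) (t := Ioi k)
      (by rw [σ.card_filter_apply_mem, Fin.card_Ioi, Fin.card_Ioi]; omega)
    simp only [mem_sdiff, mem_filter, mem_univ, mem_Ioi, true_and, not_lt] at ha hb
    have hbk : b < k := hb.2.lt_of_ne (by rintro rfl; exact lt_irrefl _ hb.1)
    rcases lt_or_gt_of_ne (σ.injective.ne hab.ne) with h | h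
    · exact h231 (permContains_p231 hab hbk ha.1 h)
    · exact h321 (permContains_p321 hab hbk hb.1 h)

lemma permAvoids_three_iff_displacementLeOne :
    (permAvoids σ p231 ∧ permAvoids σ p312 ∧ permAvoids σ p321) ↔ DisplacementLeOne σ :=
  ⟨fun h => displacementLeOne_of_permAvoids h.1 h.2.1 h.2.2,
    fun hσ =>
      ⟨hσ.permAvoids (by decide), hσ.permAvoids (by decide), hσ.permAvoids (by decide)⟩⟩

namespace DisplacementLeOne

lemma symm (hσ : DisplacementLeOne σ) : DisplacementLeOne σ.symm := fun k => by
  have := hσ (σ.symm k)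
  rw [σ.apply_symm_apply] at this
  omega

lemma exists_apply_eq_of_apply_eq_add_one (hσ : DisplacementLeOne σ) {k : Fin n}
    (hk : (σ k : ℕ) = k + 1) : ∃ m : Fin n, (m : ℕ) = k + 1 ∧ (σ m : ℕ) = k := by
  obtain ⟨m, hm, hmk⟩ := exists_mem_notMem_of_card_lt_card
    (s := Iio k) (t := {m | σ m ∈ Iio (σ k)})
    (by rw [σ.card_filter_apply_mem, Fin.card_Iio, Fin.card_Iio]; omega)
  simp only [mem_filter, mem_univ, mem_Iio, true_and, not_lt] at hm hmk
  have hkm : k < m := hmk.lt_of_ne (by rintro rfl; exact lt_irrefl _ hm)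
  have := hσ m
  refine ⟨m, ?_, ?_⟩ <;> simp only [Fin.lt_def] at hm hkm <;> omega

lemma involutive (hσ : DisplacementLeOne σ) : Function.Involutive σ := by
  intro k
  rcases Nat.lt_trichotomy (σ k) k with hk | hk | hk
  · obtain ⟨m, hm, hσm⟩ := hσ.symm.exists_apply_eq_of_apply_eq_add_one
      (k := σ k) (by have := hσ k; simp; omega)
    obtain rfl : m = k := Fin.ext (by have := hσ k; omega)
    rw [← Fin.ext hσm, σ.apply_symm_apply]
  · rw [Fin.ext hk, Fin.ext hk]
  · obtain ⟨m, hm, hσm⟩ :=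
      hσ.exists_apply_eq_of_apply_eq_add_one (k := k) (by have := hσ k; omega)
    rw [show σ k = m from Fin.ext (by have := hσ k; omega)]
    exact Fin.ext hσm

lemma apply_lt_apply_iff (hσ : DisplacementLeOne σ) {a b : Fin n}
    (hab : (b : ℕ) = a + 1) : σ b < σ a ↔ (σ a : ℕ) = a + 1 := by
  refine ⟨fun h => ?_, fun h => ?_⟩
  · have := hσ a
    have := hσ b
    rw [Fin.lt_def] at h
    omega
  · have hσb : σ b = a := by
      rw [← hσ.involutive a, show σ a = b from Fin.ext (by omega)]
    rw [Fin.lt_def, hσb]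
    omega

end DisplacementLeOne

def swapWord (σ : Perm (Fin n)) : Fin n → Bool := fun k => (σ k : ℕ) = k + 1

lemma goodWord_swapWord (hσ : DisplacementLeOne σ) : goodWord (swapWord σ) := by
  refine ⟨fun i hi hwi => ?_, fun hn => ?_⟩
  · simp only [swapWord, decide_eq_true_eq, decide_eq_false_iff_not] at hwi ⊢
    have := (hσ.apply_lt_apply_iff (a := ⟨i, by omega⟩) (b := ⟨i + 1, hi⟩) rfl).2 hwi
    rw [Fin.lt_def] at this
    omega
  · simp only [swapWord, decide_eq_false_iff_not]
    omega

lemma wordDesSet_swapWord (hσ : DisplacementLeOne σ) : wordDesSet (swapWord σ) = desSet σ := by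
  ext i
  simp only [wordDesSet, desSet, mem_filter, mem_Ico]
  refine and_congr_right fun ⟨hi₀, hi⟩ => ?_
  have hdes :=
    hσ.apply_lt_apply_iff (a := ⟨i - 1, by omega⟩) (b := ⟨i, hi⟩) (by simp; omega)
  simp only [swapWord, decide_eq_true_eq, decide_eq_false_iff_not, forall_prop_of_true hi, hdes]
  refine and_iff_left_of_imp fun h => ?_
  have := hdes.2 (by simpa using h)
  rw [Fin.lt_def] at this
  omega

def swapPermFun (w : Fin n → Bool) (k : Fin n) : Fin n :=
  if h : (k : ℕ) + 1 < n ∧ w k then ⟨k + 1, h.1⟩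
  else if h : 0 < (k : ℕ) ∧ w ⟨k - 1, by omega⟩ then ⟨k - 1, by omega⟩
  else k

variable {w : Fin n → Bool}

lemma goodWord.exists_succ (hw : goodWord w) {j : Fin n} (hj : w j = true) :
    ∃ k : Fin n, (k : ℕ) = j + 1 := by
  refine ⟨⟨j + 1, ?_⟩, rfl⟩
  by_contra! h
  have := hw.2 (by omega)
  rw [show (⟨n - 1, _⟩ : Fin n) = j from Fin.ext (by simp; omega)] at this
  simp_all

lemma swapPermFun_left {j k : Fin n} (hjk : (k : ℕ) = j + 1) (hj : w j = true) :
    swapPermFun w j = k := by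
  rw [swapPermFun, dif_pos ⟨by omega, hj⟩]
  exact Fin.ext hjk.symm

lemma swapPermFun_right (hw : goodWord w) {j k : Fin n} (hjk : (k : ℕ) = j + 1)
    (hj : w j = true) : swapPermFun w k = j := by
  have hk : w k = false := by
    rw [← hw.1 j (by omega) hj]
    congr
    exact Fin.ext hjk
  have hj' : w ⟨k - 1, by omega⟩ = true := by
    rwa [show (⟨k - 1, by omega⟩ : Fin n) = j from Fin.ext (by simp; omega)]
  rw [swapPermFun, dif_neg (by simp [hk]), dif_pos ⟨by omega, hj'⟩]
  exact Fin.ext (by simp; omega)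

lemma swapPermFun_of_forall {k : Fin n} (hk : w k = false)
    (hprev : ∀ j : Fin n, (k : ℕ) = j + 1 → w j = false) : swapPermFun w k = k := by
  rw [swapPermFun, dif_neg (by simp [hk]), dif_neg]
  rintro ⟨hk₀, hj⟩
  simp [hprev ⟨k - 1, by omega⟩ (by simp; omega)] at hj

lemma swapPermFun_involutive (hw : goodWord w) : Function.Involutive (swapPermFun w) := by
  intro k
  by_cases hk : w k = true
  · obtain ⟨m, hm⟩ := hw.exists_succ hk
    rw [swapPermFun_left hm hk, swapPermFun_right hw hm hk]
  by_cases hprev : ∃ j : Fin n, (k : ℕ) = j + 1 ∧ w j = true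
  · obtain ⟨j, hjk, hj⟩ := hprev
    rw [swapPermFun_right hw hjk hj, swapPermFun_left hjk hj]
  push Not at hprev
  simp only [Bool.not_eq_true] at hk hprev
  rw [swapPermFun_of_forall hk hprev, swapPermFun_of_forall hk hprev]

def swapPerm (w : Fin n → Bool) (hw : goodWord w) : Perm (Fin n) :=
  (swapPermFun_involutive hw).toPerm

lemma displacementLeOne_swapPerm (hw : goodWord w) : DisplacementLeOne (swapPerm w hw) := by
  intro k
  change (swapPermFun w k : ℕ) ≤ k + 1 ∧ (k : ℕ) ≤ swapPermFun w k + 1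
  unfold swapPermFun
  split_ifs <;> simp <;> omega

lemma swapWord_swapPerm (hw : goodWord w) : swapWord (swapPerm w hw) = w := by
  funext k
  change decide ((swapPermFun w k : ℕ) = k + 1) = w k
  by_cases hk : w k = true
  · obtain ⟨m, hm⟩ := hw.exists_succ hk
    simp [swapPermFun_left hm hk, hm, hk]
  by_cases hprev : ∃ j : Fin n, (k : ℕ) = j + 1 ∧ w j = true
  · obtain ⟨j, hjk, hj⟩ := hprev
    simp [swapPermFun_right hw hjk hj, hk]
    omega
  push Not at hprev
  simp only [Bool.not_eq_true] at hk hprev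
  simp [swapPermFun_of_forall hk hprev, hk]

lemma swapPerm_swapWord (hσ : DisplacementLeOne σ) :
    swapPerm (swapWord σ) (goodWord_swapWord hσ) = σ := by
  ext k
  change (swapPermFun (swapWord σ) k : ℕ) = σ k
  have hbound := hσ k
  rcases Nat.lt_trichotomy (σ k) k with hlt | heq | hgt
  · have hj : swapWord σ (σ k) = true := by simp [swapWord, hσ.involutive k]; omega
    rw [swapPermFun_right (goodWord_swapWord hσ) (by omega) hj]
  · have hk : swapWord σ k = false := by simp [swapWord]; omega
    have hprev : ∀ j : Fin n, (k : ℕ) = j + 1 → swapWord σ j = false := by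
      intro j hjk
      have : σ j ≠ σ k := σ.injective.ne (Fin.ne_of_val_ne (by omega))
      simp only [swapWord, decide_eq_false_iff_not, ne_eq, Fin.ext_iff] at this ⊢
      omega
    rw [swapPermFun_of_forall hk hprev, heq]
  · rw [swapPermFun_left (k := σ k) (by omega) (by simp [swapWord]; omega)]

def displacementLeOneEquivGoodWord (n : ℕ) :
    {σ : Perm (Fin n) // DisplacementLeOne σ} ≃ {w : Fin n → Bool // goodWord w} where
  toFun σ := ⟨swapWord σ.1, goodWord_swapWord σ.2⟩
  invFun w := ⟨swapPerm w.1 w.2, displacementLeOne_swapPerm w.2⟩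
  left_inv σ := Subtype.ext (swapPerm_swapWord σ.2)
  right_inv w := Subtype.ext (swapWord_swapPerm w.2)

theorem av_231_312_321_words (n : ℕ) :
    (∃ f : {σ : Equiv.Perm (Fin n) //
              permAvoids σ p231 ∧ permAvoids σ p312 ∧ permAvoids σ p321} ≃
           {w : Fin n → Bool // goodWord w},
        ∀ σ, wordDesSet ((f σ) : Fin n → Bool) = desSet (σ : Equiv.Perm (Fin n))) ∧
    (∀ q t : ℚ,
      ∑ σ ∈ Finset.univ.filter
          (fun σ : Equiv.Perm (Fin n) =>
            permAvoids σ p231 ∧ permAvoids σ p312 ∧ permAvoids σ p321),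
        q ^ majIdx σ * t ^ desNum σ
        = ∑ w ∈ Finset.univ.filter (fun w : Fin n → Bool => goodWord w),
            q ^ wordMaj w * t ^ wordDes w) := by
  let e := (Equiv.subtypeEquivRight fun σ => permAvoids_three_iff_displacementLeOne).trans
    (displacementLeOneEquivGoodWord n)
  have he : ∀ σ, wordDesSet (e σ : Fin n → Bool) = desSet (σ : Perm (Fin n)) := fun σ =>
    wordDesSet_swapWord (permAvoids_three_iff_displacementLeOne.1 σ.2)
  refine ⟨⟨e, he⟩, fun q t => ?_⟩
  rw [← sum_subtype_eq_sum_filter, ← sum_subtype_eq_sum_filter, subtype_univ, subtype_univ]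
  exact Fintype.sum_equiv e _ _ fun σ => by simp only [wordMaj, wordDes, majIdx, desNum, he]
end
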